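/- Fix n > 0, d > 0, logits s : Fin n → ℝ, and values v : Fin n → ℝ^d. Let A₁, …, A_T be a list of pairwise disjoint nonempty finite subsets of Fin n whose union is Fin n, and let (m_t, ℓ_t, o_t) be the online-softmax state over A_t. Then the fold of the merge operation over the list of states (m_1,ℓ_1,o_1), …, (m_T,ℓ_T,o_T) yields a state (m, ℓ, o) with m = max_{j<n} s_j, ℓ > 0, o/ℓ = ∑_{j<n} softmax(s)_j · v_j, and m + log ℓ = log ∑_{j<n} exp(s_j). (Tile-by-tile online-softmax iteration over any block partition of the keys — in particular over the two disjoint context and decoded regions of the DualKV kernel — computes exact attention.) -/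

import Mathlib

open Finset

/-- `softmax(x)_j = exp(x_j) / ∑_{l<n} exp(x_l)`. -/
noncomputable def softmax {n : ℕ} (x : Fin n → ℝ) : Fin n → ℝ :=
  fun j => Real.exp (x j) / ∑ l, Real.exp (x l)

/-- Merge of two online-softmax states. -/
noncomputable def osMerge {d : ℕ} (x y : ℝ × ℝ × (Fin d → ℝ)) :
    ℝ × ℝ × (Fin d → ℝ) :=
  (max x.1 y.1,
    Real.exp (x.1 - max x.1 y.1) * x.2.1 + Real.exp (y.1 - max x.1 y.1) * y.2.1,
    Real.exp (x.1 - max x.1 y.1) • x.2.2 + Real.exp (y.1 - max x.1 y.1) • y.2.2)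

/-- Online-softmax state over a (nonempty) index set `A ⊆ Fin n`:
`(max_{j∈A} s_j, ∑_{j∈A} exp(s_j − m_A), ∑_{j∈A} exp(s_j − m_A) • v_j)`. -/
noncomputable def osState {n d : ℕ} (s : Fin n → ℝ) (v : Fin n → Fin d → ℝ)
    (A : Finset (Fin n)) : ℝ × ℝ × (Fin d → ℝ) :=
  if hA : A.Nonempty then
    (A.sup' hA s, ∑ j ∈ A, Real.exp (s j - A.sup' hA s),
      ∑ j ∈ A, Real.exp (s j - A.sup' hA s) • v j)
  else (0, 0, 0)

/-! Each state `(m_A, ℓ_A, o_A)` is the pair `(∑_{j∈A} e^{s_j}, ∑_{j∈A} e^{s_j} v_j)` scaled by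
`e^{-m_A}`. Rescaling a state from `m_A` to any larger reference point `m` multiplies it by
`e^{m_A - m}`, so merging the states of disjoint blocks `A`, `B` rescales both to
`max m_A m_B = m_{A ∪ B}` and adds them, which is exactly the state of `A ∪ B`. Folding over the
blocks therefore yields the state of `Fin n`, from which `o/ℓ` and `m + log ℓ` are read off since
the common factor `e^{-m}` cancels. -/

section Rescale

open Real

variable {ι E : Type*} [AddCommMonoid E] [Module ℝ E]

theorem Real.exp_sub_smul_sum_exp_sub_smul (A : Finset ι) (s : ι → ℝ) (f : ι → E) (a m : ℝ) :
    exp (a - m) • ∑ j ∈ A, exp (s j - a) • f j = ∑ j ∈ A, exp (s j - m) • f j := by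
  rw [smul_sum]
  refine sum_congr rfl fun j _ => ?_
  rw [smul_smul, ← exp_add, sub_add_sub_cancel']

theorem Real.exp_sub_mul_sum_exp_sub (A : Finset ι) (s : ι → ℝ) (a m : ℝ) :
    exp (a - m) * ∑ j ∈ A, exp (s j - a) = ∑ j ∈ A, exp (s j - m) := by
  simpa using exp_sub_smul_sum_exp_sub_smul A s (fun _ => (1 : ℝ)) a m

end Rescale

section OnlineSoftmax

open Real

variable {n d : ℕ} (s : Fin n → ℝ) (v : Fin n → Fin d → ℝ) {A B : Finset (Fin n)}

theorem osState_of_nonempty (hA : A.Nonempty) :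
    osState s v A = (A.sup' hA s, ∑ j ∈ A, exp (s j - A.sup' hA s),
      ∑ j ∈ A, exp (s j - A.sup' hA s) • v j) :=
  dif_pos hA

theorem osMerge_osState (hA : A.Nonempty) (hB : B.Nonempty) (hAB : Disjoint A B) :
    osMerge (osState s v A) (osState s v B) = osState s v (A ∪ B) := by
  simp only [osMerge, osState_of_nonempty s v hA, osState_of_nonempty s v hB,
    osState_of_nonempty s v (hA.mono subset_union_left), sup'_union hA hB,
    exp_sub_mul_sum_exp_sub, exp_sub_smul_sum_exp_sub_smul, sum_union hAB]

theorem foldl_osMerge_osState (A0 : Finset (Fin n)) (As : List (Finset (Fin n)))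
    (hpair : (A0 :: As).Pairwise Disjoint) (hne : ∀ A ∈ A0 :: As, A.Nonempty) :
    (As.map (osState s v)).foldl osMerge (osState s v A0)
      = osState s v ((A0 :: As).foldr (· ∪ ·) ∅) := by
  induction As generalizing A0 with
  | nil => simp
  | cons B rest ih =>
    obtain ⟨hA0, hB, hrest⟩ : A0.Nonempty ∧ B.Nonempty ∧ ∀ A ∈ rest, A.Nonempty := by
      simpa using hne
    obtain ⟨⟨hA0B, hA0rest⟩, hBrest, hpair_rest⟩ :
        (Disjoint A0 B ∧ ∀ A ∈ rest, Disjoint A0 A) ∧ (∀ A ∈ rest, Disjoint B A) ∧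
          rest.Pairwise Disjoint := by
      simpa using hpair
    have hpair' : ((A0 ∪ B) :: rest).Pairwise Disjoint :=
      List.pairwise_cons.mpr ⟨fun A hA => disjoint_union_left.mpr ⟨hA0rest A hA, hBrest A hA⟩,
        hpair_rest⟩
    have hne' : ∀ A ∈ (A0 ∪ B) :: rest, A.Nonempty := by
      simpa [hA0.mono subset_union_left] using hrest
    rw [List.map_cons, List.foldl_cons, osMerge_osState s v hA0 hB hA0B, ih _ hpair' hne']
    simp only [List.foldr_cons, union_assoc]

variable (hA : A.Nonempty)
include hA

theorem osState_fst : (osState s v A).1 = A.sup' hA s := by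
  rw [osState_of_nonempty s v hA]

theorem osState_snd_fst_pos : 0 < (osState s v A).2.1 := by
  rw [osState_of_nonempty s v hA]
  exact sum_pos (fun j _ => exp_pos _) hA

theorem osState_fst_add_log_snd_fst :
    (osState s v A).1 + log (osState s v A).2.1 = log (∑ j ∈ A, exp (s j)) := by
  have hℓ := osState_snd_fst_pos s v hA
  have hsum : ∑ j ∈ A, exp (s j) = exp (A.sup' hA s) * ∑ j ∈ A, exp (s j - A.sup' hA s) := by
    simpa using (exp_sub_mul_sum_exp_sub A s (A.sup' hA s) 0).symm
  rw [osState_of_nonempty s v hA] at hℓ ⊢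
  rw [hsum, log_mul (exp_ne_zero _) hℓ.ne', log_exp]

theorem inv_osState_snd_fst_smul_snd_snd :
    (osState s v A).2.1⁻¹ • (osState s v A).2.2
      = ∑ j ∈ A, (exp (s j) / ∑ l ∈ A, exp (s l)) • v j := by
  rw [osState_of_nonempty s v hA, smul_sum]
  refine sum_congr rfl fun j _ => ?_
  simp only [smul_smul, exp_sub, ← sum_div]
  field_simp

end OnlineSoftmax

theorem online_softmax_fold_general {n d : ℕ} (hn : 0 < n)
    (s : Fin n → ℝ) (v : Fin n → Fin d → ℝ)
    (A0 : Finset (Fin n)) (As : List (Finset (Fin n)))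
    (hpair : (A0 :: As).Pairwise fun A B => Disjoint A B)
    (hne : ∀ A ∈ A0 :: As, A.Nonempty)
    (hcover : (A0 :: As).foldr (· ∪ ·) ∅ = Finset.univ) :
    ((As.map (osState s v)).foldl osMerge (osState s v A0)).1
        = Finset.univ.sup' (Finset.univ_nonempty_iff.mpr ⟨⟨0, hn⟩⟩) s ∧
    0 < ((As.map (osState s v)).foldl osMerge (osState s v A0)).2.1 ∧
    (((As.map (osState s v)).foldl osMerge (osState s v A0)).2.1)⁻¹ •
        ((As.map (osState s v)).foldl osMerge (osState s v A0)).2.2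
      = ∑ j, softmax s j • v j ∧
    ((As.map (osState s v)).foldl osMerge (osState s v A0)).1 +
        Real.log ((As.map (osState s v)).foldl osMerge (osState s v A0)).2.1
      = Real.log (∑ j, Real.exp (s j)) := by
  have huniv : (Finset.univ : Finset (Fin n)).Nonempty := Finset.univ_nonempty_iff.mpr ⟨⟨0, hn⟩⟩
  rw [foldl_osMerge_osState s v A0 As hpair hne, hcover]
  exact ⟨osState_fst s v huniv, osState_snd_fst_pos s v huniv,
    inv_osState_snd_fst_smul_snd_snd s v huniv, osState_fst_add_log_snd_fst s v huniv⟩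

/-- Tile-by-tile online-softmax iteration over any block partition of the keys
computes exact attention: folding the merge over the states of pairwise-disjoint
nonempty blocks covering `Fin n` yields `m = max_j s_j`, `ℓ > 0`,
`o/ℓ = ∑ softmax(s)_j • v_j`, and `m + log ℓ = log ∑ exp(s_j)`. -/
theorem online_softmax_fold {n d : ℕ} (hn : 0 < n) (hd : 0 < d)
    (s : Fin n → ℝ) (v : Fin n → Fin d → ℝ)
    (A0 : Finset (Fin n)) (As : List (Finset (Fin n)))
    (hpair : (A0 :: As).Pairwise fun A B => Disjoint A B)
    (hne : ∀ A ∈ A0 :: As, A.Nonempty)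
    (hcover : (A0 :: As).foldr (· ∪ ·) ∅ = Finset.univ) :
    ((As.map (osState s v)).foldl osMerge (osState s v A0)).1
        = Finset.univ.sup' (Finset.univ_nonempty_iff.mpr ⟨⟨0, hn⟩⟩) s ∧
    0 < ((As.map (osState s v)).foldl osMerge (osState s v A0)).2.1 ∧
    (((As.map (osState s v)).foldl osMerge (osState s v A0)).2.1)⁻¹ •
        ((As.map (osState s v)).foldl osMerge (osState s v A0)).2.2
      = ∑ j, softmax s j • v j ∧
    ((As.map (osState s v)).foldl osMerge (osState s v A0)).1 +
        Real.log ((As.map (osState s v)).foldl osMerge (osState s v A0)).2.1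
      = Real.log (∑ j, Real.exp (s j)) :=
  online_softmax_fold_general hn s v A0 As hpair hne hcover
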